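/- Let Γ be a locally rectifiable Jordan curve, w ∉ Γ with δ(w) = dist(w,Γ), and 1 < p < 2. Write Γ_{2w} = Γ ∩ B(w, 2δ(w)) and F(z) = (w−z)^{-1}. Then ‖F‖_{B_p(Γ)}^p ≥ c δ(w)^{-p-2} ℓ(Γ_{2w})², where c depends only on p. Consequently, if ‖F‖_{B_p(Γ)}^p ≤ M δ(w)^{-p} then ℓ(Γ_{2w}) ≤ (M/c)^{1/2} δ(w). -/

import Mathlib

/-!
For `ζ, η` on `Γ_{2w}` the integrand of the Besov norm is
`|ζ - η|^{p-2} / (|ζ - w| |η - w|)^p`; as `p - 2 ≤ 0 ≤ p`, `|ζ - w|, |η - w| < 2δ(w)` and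
`|ζ - η| < 4δ(w)`, it is bounded below by a multiple of `δ(w)^{-p-2}`. Integrating this bound over
`Γ_{2w} × Γ_{2w}` (the diagonal is null, the complement only adds mass) gives the first
inequality, and the second follows by dividing by `c δ(w)^{-p-2}` and taking square roots.
-/

open MeasureTheory Complex Set Metric
open scoped ENNReal Real

noncomputable section

/-- `γ : ℝ → ℂ` is an (injective) arc-length parametrization: the arc length of `γ` over
`[s, t]` equals `t - s`. Its range is then a locally rectifiable Jordan curve through `∞`. -/
def IsArcLengthParam (γ : ℝ → ℂ) : Prop :=
  Function.Injective γ ∧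
    ∀ s t : ℝ, s ≤ t → eVariationOn γ (Set.Icc s t) = ENNReal.ofReal (t - s)

/-- The boundary Besov `p`-norm (to the `p`-th power) of the test function
`F(z) = (w - z)⁻¹` on the curve parametrized by arc length by `γ`:
`‖F‖_{B_p(Γ)}^p = ∫_Γ ∫_Γ |F(ζ) - F(η)|^p |ζ - η|^{-2} |dζ| |dη|`. -/
def besovTest (p : ℝ) (γ : ℝ → ℂ) (w : ℂ) : ℝ≥0∞ :=
  ∫⁻ s : ℝ, ∫⁻ t : ℝ,
    ENNReal.ofReal (‖(w - γ s)⁻¹ - (w - γ t)⁻¹‖ ^ p * dist (γ s) (γ t) ^ (-2 : ℝ))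

theorem norm_inv_sub_inv_eq {𝕜 : Type*} [NormedDivisionRing 𝕜] {w a b : 𝕜} (ha : a ≠ w)
    (hb : b ≠ w) : ‖(w - a)⁻¹ - (w - b)⁻¹‖ = dist a b / (‖w - a‖ * ‖w - b‖) := by
  rw [← dist_eq_norm, dist_inv_inv₀ (sub_ne_zero.2 ha.symm) (sub_ne_zero.2 hb.symm),
    dist_sub_left, dist_comm]

theorem two_rpow_mul_rpow_le_norm_inv_sub_inv_rpow_mul {𝕜 : Type*} [NormedDivisionRing 𝕜]
    {p R : ℝ} (hp0 : 0 ≤ p) (hp2 : p ≤ 2) {w a b : 𝕜} (ha : dist a w ≤ R) (hb : dist b w ≤ R)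
    (haw : a ≠ w) (hbw : b ≠ w) (hab : a ≠ b) :
    2 ^ (p - 2) * R ^ (-p - 2) ≤ ‖(w - a)⁻¹ - (w - b)⁻¹‖ ^ p * dist a b ^ (-2 : ℝ) := by
  have hA : 0 < ‖w - a‖ := norm_pos_iff.2 (sub_ne_zero.2 haw.symm)
  have hB : 0 < ‖w - b‖ := norm_pos_iff.2 (sub_ne_zero.2 hbw.symm)
  have hr : 0 < dist a b := dist_pos.2 hab
  have hAR : ‖w - a‖ ≤ R := by rwa [← dist_eq_norm, dist_comm]
  have hBR : ‖w - b‖ ≤ R := by rwa [← dist_eq_norm, dist_comm]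
  have hR : 0 < R := hA.trans_le hAR
  have hrR : dist a b ≤ 2 * R := by linarith [dist_triangle_right a b w]
  calc 2 ^ (p - 2) * R ^ (-p - 2) = (2 * R) ^ (p - 2) * R ^ (-p) * R ^ (-p) := by
        rw [Real.mul_rpow zero_le_two hR.le, mul_assoc, mul_assoc, ← Real.rpow_add hR,
          ← Real.rpow_add hR]
        ring_nf
    _ ≤ dist a b ^ (p - 2) * ‖w - a‖ ^ (-p) * ‖w - b‖ ^ (-p) := by
        gcongr ?_ * ?_ * ?_
        · exact Real.rpow_le_rpow_of_nonpos hr hrR (by linarith)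
        · exact Real.rpow_le_rpow_of_nonpos hA hAR (by linarith)
        · exact Real.rpow_le_rpow_of_nonpos hB hBR (by linarith)
    _ = ‖(w - a)⁻¹ - (w - b)⁻¹‖ ^ p * dist a b ^ (-2 : ℝ) := by
        rw [norm_inv_sub_inv_eq haw hbw, Real.div_rpow hr.le (by positivity),
          Real.mul_rpow hA.le hB.le, Real.rpow_sub hr, Real.rpow_neg hA.le, Real.rpow_neg hB.le,
          Real.rpow_neg hr.le, Real.rpow_two]
        field_simp

theorem lipschitzWith_one_of_eVariationOn_Icc_le {E : Type*} [PseudoEMetricSpace E]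
    {γ : ℝ → E} (hγ : ∀ s t : ℝ, s ≤ t → eVariationOn γ (Icc s t) ≤ ENNReal.ofReal (t - s)) :
    LipschitzWith 1 γ := by
  refine LipschitzWith.of_edist_le fun s t => ?_
  wlog hst : s ≤ t generalizing s t
  · rw [edist_comm, edist_comm s]
    exact this t s (le_of_not_ge hst)
  calc edist (γ s) (γ t) ≤ eVariationOn γ (Set.Icc s t) :=
        eVariationOn.edist_le γ (left_mem_Icc.2 hst) (right_mem_Icc.2 hst)
    _ ≤ ENNReal.ofReal (t - s) := hγ s t hst
    _ = edist s t := by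
        rw [edist_dist, Real.dist_eq, abs_sub_comm, abs_of_nonneg (sub_nonneg.2 hst)]

theorem mul_measure_sq_le_lintegral_lintegral {α : Type*} [MeasurableSpace α] {μ : Measure α}
    [NullSingletonClass μ] {E : Set α} (hE : MeasurableSet E) {f : α → α → ℝ≥0∞} {K : ℝ≥0∞}
    (hK : ∀ s ∈ E, ∀ t ∈ E, t ≠ s → K ≤ f s t) :
    K * μ E ^ 2 ≤ ∫⁻ s, ∫⁻ t, f s t ∂μ ∂μ := by
  have hinner : ∀ s ∈ E, K * μ E ≤ ∫⁻ t in E, f s t ∂μ := fun s hs => by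
    rw [← setLIntegral_const]
    refine setLIntegral_mono_ae' hE ?_
    filter_upwards [μ.ae_ne s] with t hts ht using hK s hs t ht hts
  calc K * μ E ^ 2 = ∫⁻ _ in E, K * μ E ∂μ := by rw [setLIntegral_const, sq, mul_assoc]
    _ ≤ ∫⁻ s in E, ∫⁻ t in E, f s t ∂μ ∂μ := setLIntegral_mono' hE hinner
    _ ≤ ∫⁻ s, ∫⁻ t, f s t ∂μ ∂μ :=
        (setLIntegral_le_lintegral E _).trans
          (lintegral_mono fun s => setLIntegral_le_lintegral E _)

theorem le_ofReal_of_ofReal_mul_sq_le {V : ℝ≥0∞} {a b : ℝ} (ha : 0 < a) (hb : 0 ≤ b)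
    (h : ENNReal.ofReal a * V ^ 2 ≤ ENNReal.ofReal b) :
    V ≤ ENNReal.ofReal (Real.sqrt (b / a)) := by
  have hsq : V ^ 2 ≤ ENNReal.ofReal (Real.sqrt (b / a)) ^ 2 := by
    rw [← ENNReal.ofReal_pow (Real.sqrt_nonneg _), Real.sq_sqrt (by positivity),
      ENNReal.ofReal_div_of_pos ha]
    exact ENNReal.le_div_iff_mul_le (.inl (by simpa using ha)) (.inl ENNReal.ofReal_ne_top)
      |>.2 (by rwa [mul_comm])
  exact (ENNReal.pow_le_pow_left_iff two_ne_zero).1 hsq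

/-- For `1 < p < 2`, `w ∉ Γ`, `F(z) = (w-z)⁻¹` and `Γ_{2w} = Γ ∩ B(w, 2δ(w))`:
`‖F‖_{B_p(Γ)}^p ≥ c δ(w)^{-p-2} ℓ(Γ_{2w})²` with `c = c(p) > 0`; consequently
`‖F‖_{B_p(Γ)}^p ≤ M δ(w)^{-p}` implies `ℓ(Γ_{2w}) ≤ √(M/c) δ(w)`. -/
theorem statement15 (p : ℝ) (hp1 : 1 < p) (hp2 : p < 2) :
    ∃ c : ℝ, 0 < c ∧
      ∀ (γ : ℝ → ℂ) (w : ℂ) (d : ℝ),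
        IsArcLengthParam γ → w ∉ Set.range γ →
        d = Metric.infDist w (Set.range γ) → 0 < d →
        (ENNReal.ofReal (c * d ^ (-p - 2)) *
            volume (γ ⁻¹' Metric.ball w (2 * d)) ^ 2 ≤ besovTest p γ w) ∧
        (∀ M : ℝ, 0 < M → besovTest p γ w ≤ ENNReal.ofReal (M * d ^ (-p)) →
          volume (γ ⁻¹' Metric.ball w (2 * d)) ≤
            ENNReal.ofReal (Real.sqrt (M / c) * d)) := by
  refine ⟨2 ^ (p - 2) * 2 ^ (-p - 2), by positivity, fun γ w d ⟨hinj, hvar⟩ hw _ hd => ?_⟩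
  set c : ℝ := 2 ^ (p - 2) * 2 ^ (-p - 2) with hc_def
  have hc : 0 < c := by positivity
  have hγ : Measurable γ :=
    (lipschitzWith_one_of_eVariationOn_Icc_le fun s t h => (hvar s t h).le).continuous.measurable
  have hlower : ENNReal.ofReal (c * d ^ (-p - 2)) * volume (γ ⁻¹' ball w (2 * d)) ^ 2 ≤
      besovTest p γ w := by
    refine mul_measure_sq_le_lintegral_lintegral (hγ measurableSet_ball)
      fun s hs t ht hts => ENNReal.ofReal_le_ofReal ?_
    rw [hc_def, mul_assoc, ← Real.mul_rpow zero_le_two hd.le]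
    exact two_rpow_mul_rpow_le_norm_inv_sub_inv_rpow_mul (by linarith) hp2.le
      (mem_ball.1 hs).le (mem_ball.1 ht).le (fun h => hw ⟨s, h⟩) (fun h => hw ⟨t, h⟩)
      (hinj.ne hts.symm)
  refine ⟨hlower, fun M hM hB => ?_⟩
  have hratio : M * d ^ (-p) / (c * d ^ (-p - 2)) = M / c * d ^ 2 := by
    rw [Real.rpow_sub hd, Real.rpow_two]
    field_simp
  have hsqrt : Real.sqrt (M * d ^ (-p) / (c * d ^ (-p - 2))) = Real.sqrt (M / c) * d := by
    rw [hratio, Real.sqrt_mul' _ (sq_nonneg d), Real.sqrt_sq hd.le]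
  rw [← hsqrt]
  exact le_ofReal_of_ofReal_mul_sq_le (by positivity) (by positivity) (hlower.trans hB)
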